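/- There is at most one function V : [−p/α,∞) → ℝ that is a nondecreasing, nonnegative viscosity solution of the HJB equation on (−p/α,∞), is continuous on [−p/α,∞) and locally Lipschitz on (−p/α,∞), satisfies a linear growth bound (there exist constants c₁, c₂ with V(x) ≤ c₁·x + c₂ for all x ≥ −p/α), and satisfies the boundary condition V(−p/α) = 0. That is, any two functions with all these properties coincide on [−p/α,∞). -/

import Mathlib

open MeasureTheory Set Filter

noncomputable section

/-- Drift coefficient: c(x) = p + r x for x ≥ 0, c(x) = p + α x for x < 0. -/
def drift (p r a x : ℝ) : ℝ := if 0 ≤ x then p + r * x else p + a * x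

/-- I_v(x) = ∫_{(0, x+p/α]} v(x−u) dμ(u). -/
def Iop (p a : ℝ) (mu : Measure ℝ) (v : ℝ → ℝ) (x : ℝ) : ℝ :=
  ∫ u in Set.Ioc (0 : ℝ) (x + p / a), v (x - u) ∂mu

/-- L_{v,φ}(x) = c(x)·φ′(x) − (λ+δ)·v(x) + λ·I_v(x). -/
def Lphi (p lam d r a : ℝ) (mu : Measure ℝ) (v phi : ℝ → ℝ) (x : ℝ) : ℝ :=
  drift p r a x * deriv phi x - (lam + d) * v x + lam * Iop p a mu v x

/-- G_v(x) = c(x) − (λ+δ)·v(x) + λ·I_v(x). -/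
def Gop (p lam d r a : ℝ) (mu : Measure ℝ) (v : ℝ → ℝ) (x : ℝ) : ℝ :=
  drift p r a x - (lam + d) * v x + lam * Iop p a mu v x

/-- Viscosity sub-solution of the HJB equation on J ⊆ (−p/α,∞). -/
def IsViscSubsol (p lam d r a : ℝ) (mu : Measure ℝ) (u : ℝ → ℝ) (J : Set ℝ) : Prop :=
  ∀ x ∈ J, ∀ phi : ℝ → ℝ, ContDiff ℝ 1 phi → phi x = u x →
    (∀ y ∈ Set.Ici (-(p / a)), u y - phi y ≤ u x - phi x) →
    0 ≤ max (1 - deriv phi x) (Lphi p lam d r a mu u phi x)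

/-- Viscosity super-solution of the HJB equation on J ⊆ (−p/α,∞). -/
def IsViscSupersol (p lam d r a : ℝ) (mu : Measure ℝ) (u : ℝ → ℝ) (J : Set ℝ) : Prop :=
  ∀ x ∈ J, ∀ phi : ℝ → ℝ, ContDiff ℝ 1 phi → phi x = u x →
    (∀ y ∈ Set.Ici (-(p / a)), u x - phi x ≤ u y - phi y) →
    max (1 - deriv phi x) (Lphi p lam d r a mu u phi x) ≤ 0

/-- Viscosity solution: both sub- and super-solution. -/
def IsViscSol (p lam d r a : ℝ) (mu : Measure ℝ) (u : ℝ → ℝ) (J : Set ℝ) : Prop :=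
  IsViscSubsol p lam d r a mu u J ∧ IsViscSupersol p lam d r a mu u J

/-- Locally Lipschitz on a set. -/
def LocLipOn (s : Set ℝ) (u : ℝ → ℝ) : Prop :=
  ∀ x ∈ s, ∃ K : NNReal, ∃ eps : ℝ, 0 < eps ∧ LipschitzOnWith K u (s ∩ Metric.ball x eps)

/-- Linear growth bound on [−p/α,∞). -/
def LinGrowth (p a : ℝ) (u : ℝ → ℝ) : Prop :=
  ∃ c₁ c₂ : ℝ, ∀ x : ℝ, -(p / a) ≤ x → u x ≤ c₁ * x + c₂

/-- Standard value-function candidate. -/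
structure IsCandidate (p lam d r a : ℝ) (mu : Measure ℝ) (V : ℝ → ℝ) : Prop where
  cont : ContinuousOn V (Set.Ici (-(p / a)))
  nonneg : ∀ x ∈ Set.Ici (-(p / a)), 0 ≤ V x
  mono : MonotoneOn V (Set.Ici (-(p / a)))
  boundary : V (-(p / a)) = 0
  slope : ∀ x y : ℝ, -(p / a) ≤ x → x ≤ y → y - x ≤ V y - V x
  growth : ∀ x : ℝ, 0 ≤ x → V x ≤ (d * x + p) / (d - r) + p / a
  locLip : LocLipOn (Set.Ioi (-(p / a))) V
  visc : IsViscSol p lam d r a mu V (Set.Ioi (-(p / a)))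
  derivLim : ∀ x ∈ Set.Ioi (-(p / a)), ∀ (h : ℕ → ℝ) (dd : ℝ),
      ((∀ n, 0 < h n) ∨ (∀ n, h n < 0)) →
      Filter.Tendsto h Filter.atTop (nhds 0) →
      Filter.Tendsto (fun n => (V (x + h n) - V x) / h n) Filter.atTop (nhds dd) →
      1 ≤ dd ∧ dd * drift p r a x - (lam + d) * V x + lam * Iop p a mu V x ≤ 0

/-- The set A = {x ∈ [−p/α,∞) : G_V(x) = 0}. -/
def setA (p lam d r a : ℝ) (mu : Measure ℝ) (V : ℝ → ℝ) : Set ℝ :=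
  {x | x ∈ Set.Ici (-(p / a)) ∧ Gop p lam d r a mu V x = 0}

/-- The set B = {x ∈ [−p/α,∞) : V′(x) exists, V′(x) = 1 and G_V(x) < 0}. -/
def setB (p lam d r a : ℝ) (mu : Measure ℝ) (V : ℝ → ℝ) : Set ℝ :=
  {x | x ∈ Set.Ici (-(p / a)) ∧ DifferentiableAt ℝ V x ∧ deriv V x = 1 ∧
      Gop p lam d r a mu V x < 0}

/-- The set C = [−p/α,∞) \ (A ∪ B). -/
def setC (p lam d r a : ℝ) (mu : Measure ℝ) (V : ℝ → ℝ) : Set ℝ :=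
  Set.Ici (-(p / a)) \ (setA p lam d r a mu V ∪ setB p lam d r a mu V)


/-!
Comparison by doubling the variables. If a subsolution `u` exceeded a supersolution `v`
somewhere, maximise `u x - v y - ε Ψ (x + p/α) - N (x - y) ^ 2` over `[-p/α, ∞)²`, where
`Ψ t = ∫₀ᵗ arsinh` is superlinear, so that the maximum exists despite the linear growth of
`u`, while `(p + r t) Ψ' t - δ Ψ t` stays bounded because `r < δ`, so the penalty costs only
`O(ε)` in the equation. Along `N → ∞` the maximisers satisfy `N (x - y) ^ 2 → 0`, and
`u (-p/α) = 0` keeps them off the boundary. Testing the subsolution at `x` and the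
supersolution at `y` and subtracting, the drift is Lipschitz and the two nonlocal terms differ
by at most `λ (u x - v y)` plus `λ u (-p/α + |x - y|)`, so `δ (u x - v y)` is bounded by small
quantities, which is absurd. Uniqueness follows by comparing in both directions.
-/

open Real Topology

def arsinhPrimitive (t : ℝ) : ℝ := t * arsinh t - √(1 + t ^ 2) + 1

lemma hasDerivAt_arsinhPrimitive (t : ℝ) : HasDerivAt arsinhPrimitive (arsinh t) t := by
  have hsq : 0 < 1 + t ^ 2 := by positivity
  have hroot : √(1 + t ^ 2) ≠ 0 := (Real.sqrt_pos.2 hsq).ne'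
  have h₁ : HasDerivAt (fun s => s * arsinh s) (1 * arsinh t + t * (√(1 + t ^ 2))⁻¹) t :=
    (hasDerivAt_id' t).mul (hasDerivAt_arsinh t)
  have h₂ : HasDerivAt (fun s => √(1 + s ^ 2)) (2 * t / (2 * √(1 + t ^ 2))) t := by
    simpa using ((hasDerivAt_pow 2 t).const_add 1).sqrt hsq.ne'
  refine ((h₁.sub h₂).add_const 1).congr_deriv ?_
  field_simp
  ring

@[fun_prop]
lemma contDiff_arsinhPrimitive : ContDiff ℝ 1 arsinhPrimitive := by
  rw [contDiff_one_iff_deriv]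
  refine ⟨fun t => (hasDerivAt_arsinhPrimitive t).differentiableAt, ?_⟩
  rw [funext fun t => (hasDerivAt_arsinhPrimitive t).deriv]
  exact continuous_arsinh

@[fun_prop]
lemma continuous_arsinhPrimitive : Continuous arsinhPrimitive :=
  contDiff_arsinhPrimitive.continuous

lemma monotoneOn_arsinhPrimitive : MonotoneOn arsinhPrimitive (Ici 0) :=
  monotoneOn_of_deriv_nonneg (convex_Ici 0) continuous_arsinhPrimitive.continuousOn
    (fun t _ => (hasDerivAt_arsinhPrimitive t).differentiableAt.differentiableWithinAt)
    fun t ht => by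
      rw [interior_Ici] at ht
      rw [(hasDerivAt_arsinhPrimitive t).deriv]
      exact arsinh_nonneg_iff.2 (le_of_lt ht)

lemma arsinhPrimitive_nonneg {t : ℝ} (ht : 0 ≤ t) : 0 ≤ arsinhPrimitive t := by
  simpa [arsinhPrimitive] using monotoneOn_arsinhPrimitive self_mem_Ici ht ht

lemma sqrt_one_add_sq_le_one_add {t : ℝ} (ht : 0 ≤ t) : √(1 + t ^ 2) ≤ 1 + t :=
  Real.sqrt_le_iff.2 ⟨by linarith, by nlinarith⟩

lemma arsinh_le_self {t : ℝ} (ht : 0 ≤ t) : arsinh t ≤ t := by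
  simpa only [arsinh_sinh] using arsinh_le_arsinh.2 (self_le_sinh_iff.2 ht)

lemma mul_arsinh_sub_one_le_arsinhPrimitive {t : ℝ} (ht : 0 ≤ t) :
    t * (arsinh t - 1) ≤ arsinhPrimitive t := by
  have := sqrt_one_add_sq_le_one_add ht
  simp only [arsinhPrimitive]
  linarith

lemma eventually_mul_le_arsinhPrimitive (C : ℝ) :
    ∀ᶠ t in atTop, C * t ≤ arsinhPrimitive t := by
  filter_upwards [eventually_ge_atTop (max 0 (sinh (C + 1)))] with t ht
  have ht0 : 0 ≤ t := le_of_max_le_left ht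
  have hC : C + 1 ≤ arsinh t := by
    simpa only [arsinh_sinh] using arsinh_le_arsinh.2 (le_of_max_le_right ht)
  nlinarith [mul_arsinh_sub_one_le_arsinhPrimitive ht0]

lemma generator_arsinhPrimitive_le {p r d : ℝ} (hp : 0 ≤ p) (hd : 0 ≤ d) (hrd : r < d)
    {t : ℝ} (ht : 0 ≤ t) :
    (p + r * t) * arsinh t - d * arsinhPrimitive t ≤ (p + d) * sinh ((p + d) / (d - r)) := by
  have hdr : 0 < d - r := by linarith
  have hS0 : 0 ≤ arsinh t := arsinh_nonneg_iff.2 ht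
  have hSt : arsinh t ≤ t := arsinh_le_self ht
  have hsqrt := sqrt_one_add_sq_le_one_add ht
  have hK : 0 ≤ (p + d) * sinh ((p + d) / (d - r)) :=
    mul_nonneg (by linarith) (sinh_nonneg_iff.2 (div_nonneg (by linarith) hdr.le))
  have hlin : (p + r * t) * arsinh t - d * arsinhPrimitive t
      ≤ p * arsinh t + d * t - (d - r) * t * arsinh t := by
    simp only [arsinhPrimitive]
    nlinarith [mul_le_mul_of_nonneg_left hsqrt hd]
  rcases le_or_gt ((p + d) / (d - r)) (arsinh t) with hS | hS
  · -- for large t the dissipation `(d - r) t arsinh t` dominates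
    rw [div_le_iff₀ hdr] at hS
    nlinarith [mul_le_mul_of_nonneg_left hS ht, mul_le_mul_of_nonneg_left hSt hp]
  · have htT : t ≤ sinh ((p + d) / (d - r)) := by
      simpa only [sinh_arsinh] using (sinh_lt_sinh.2 hS).le
    nlinarith [mul_nonneg (mul_nonneg hdr.le ht) hS0]

lemma drift_le {p r a : ℝ} (hp : 0 ≤ p) (hr : 0 ≤ r) (hra : r ≤ a) (x : ℝ) :
    drift p r a x ≤ p + r * (x + p / a) := by
  have hpa : 0 ≤ r * (p / a) := mul_nonneg hr (div_nonneg hp (hr.trans hra))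
  unfold drift
  split_ifs
  · linarith
  · nlinarith

lemma abs_drift_sub_drift_le {p r a : ℝ} (hr : 0 ≤ r) (hra : r ≤ a) (x y : ℝ) :
    |drift p r a x - drift p r a y| ≤ a * |x - y| := by
  unfold drift
  rw [abs_le]
  rcases abs_cases (x - y) with ⟨h, _⟩ | ⟨h, _⟩ <;> rw [h] <;> split_ifs <;>
    constructor <;> nlinarith

lemma integrableOn_comp_sub {mu : Measure ℝ} [IsFiniteMeasure mu] {w : ℝ → ℝ} {b x : ℝ}
    (hw : ContinuousOn w (Ici b)) :
    IntegrableOn (fun t => w (x - t)) (Ioc 0 (x - b)) mu := by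
  refine (ContinuousOn.integrableOn_compact isCompact_Icc ?_).mono_set Ioc_subset_Icc_self
  exact hw.comp (continuous_const.sub continuous_id).continuousOn
    fun t ht => by simp only [mem_Ici]; linarith [ht.2]

lemma setIntegral_le_of_le {mu : Measure ℝ} [IsProbabilityMeasure mu] {f : ℝ → ℝ}
    {s : Set ℝ} (hs : MeasurableSet s) (hf : IntegrableOn f s mu) {c : ℝ} (hc : 0 ≤ c)
    (hfc : ∀ t ∈ s, f t ≤ c) : ∫ t in s, f t ∂mu ≤ c :=
  calc ∫ t in s, f t ∂mu ≤ ∫ _ in s, c ∂mu :=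
        setIntegral_mono_on hf (integrableOn_const (measure_ne_top mu s)) hs hfc
    _ = mu.real s * c := setIntegral_const c
    _ ≤ c := mul_le_of_le_one_left hc measureReal_le_one

lemma Iop_sub_Iop_le {p a : ℝ} {mu : Measure ℝ} [IsProbabilityMeasure mu] {u v : ℝ → ℝ}
    (hu : ContinuousOn u (Ici (-(p / a)))) (hv : ContinuousOn v (Ici (-(p / a))))
    (hv_nonneg : ∀ y ∈ Ici (-(p / a)), 0 ≤ v y) {x y c s : ℝ}
    (hx : -(p / a) ≤ x) (hy : -(p / a) ≤ y) (hc : 0 ≤ c) (hs : 0 ≤ s)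
    (hcommon : ∀ t ∈ Ioc 0 (min x y + p / a), u (x - t) - v (y - t) ≤ c)
    (hsliver : ∀ t ∈ Ioc (min x y + p / a) (x + p / a), u (x - t) ≤ s) :
    Iop p a mu u x - Iop p a mu v y ≤ c + s := by
  set m := min x y + p / a
  have hm0 : 0 ≤ m := by linarith [le_min hx hy]
  have hmx : m ≤ x + p / a := by linarith [min_le_left x y]
  have hmy : m ≤ y + p / a := by linarith [min_le_right x y]
  have hIu : IntegrableOn (fun t => u (x - t)) (Ioc 0 (x + p / a)) mu := by
    simpa using integrableOn_comp_sub (mu := mu) (x := x) hu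
  have hIv : IntegrableOn (fun t => v (y - t)) (Ioc 0 (y + p / a)) mu := by
    simpa using integrableOn_comp_sub (mu := mu) (x := y) hv
  have hsplit : Ioc 0 (x + p / a) = Ioc 0 m ∪ Ioc m (x + p / a) :=
    (Ioc_union_Ioc_eq_Ioc hm0 hmx).symm
  have hIu₁ : IntegrableOn (fun t => u (x - t)) (Ioc 0 m) mu :=
    hIu.mono_set (hsplit ▸ subset_union_left)
  have hIu₂ : IntegrableOn (fun t => u (x - t)) (Ioc m (x + p / a)) mu :=
    hIu.mono_set (hsplit ▸ subset_union_right)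
  have hIv₁ : IntegrableOn (fun t => v (y - t)) (Ioc 0 m) mu :=
    hIv.mono_set (Ioc_subset_Ioc_right hmy)
  have hu_split : Iop p a mu u x
      = (∫ t in Ioc 0 m, u (x - t) ∂mu) + ∫ t in Ioc m (x + p / a), u (x - t) ∂mu := by
    rw [Iop, hsplit]
    exact setIntegral_union (Ioc_disjoint_Ioc_of_le le_rfl) measurableSet_Ioc hIu₁ hIu₂
  have hv_sub : ∫ t in Ioc 0 m, v (y - t) ∂mu ≤ Iop p a mu v y := by
    refine setIntegral_mono_set hIv ?_ (Ioc_subset_Ioc_right hmy).eventuallyLE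
    refine (ae_restrict_iff' measurableSet_Ioc).2 (ae_of_all _ fun t ht => hv_nonneg _ ?_)
    simp only [mem_Ici]; linarith [ht.2]
  have hcommon_int :
      (∫ t in Ioc 0 m, u (x - t) ∂mu) - ∫ t in Ioc 0 m, v (y - t) ∂mu ≤ c := by
    rw [← integral_sub hIu₁ hIv₁]
    exact setIntegral_le_of_le measurableSet_Ioc (hIu₁.sub hIv₁) hc hcommon
  have hsliver_int := setIntegral_le_of_le measurableSet_Ioc hIu₂ hs hsliver
  linarith

section Viscosity

variable {p lam d r a : ℝ} {mu : Measure ℝ} {u ψ : ℝ → ℝ} {J : Set ℝ} {x q : ℝ}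

lemma IsViscSubsol.le_max_of_hasDerivAt (hu : IsViscSubsol p lam d r a mu u J) (hx : x ∈ J)
    (hψ : ContDiff ℝ 1 ψ) (hψx : HasDerivAt ψ q x)
    (hmax : ∀ y ∈ Ici (-(p / a)), u y - ψ y ≤ u x - ψ x) :
    0 ≤ max (1 - q) (drift p r a x * q - (lam + d) * u x + lam * Iop p a mu u x) := by
  have h := hu x hx (fun y => ψ y + (u x - ψ x)) (hψ.add contDiff_const) (by ring)
    fun y hy => by linarith [hmax y hy]
  rwa [Lphi, (hψx.add_const _).deriv] at h

lemma IsViscSupersol.max_le_of_hasDerivAt (hu : IsViscSupersol p lam d r a mu u J) (hx : x ∈ J)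
    (hψ : ContDiff ℝ 1 ψ) (hψx : HasDerivAt ψ q x)
    (hmin : ∀ y ∈ Ici (-(p / a)), u x - ψ x ≤ u y - ψ y) :
    max (1 - q) (drift p r a x * q - (lam + d) * u x + lam * Iop p a mu u x) ≤ 0 := by
  have h := hu x hx (fun y => ψ y + (u x - ψ x)) (hψ.add contDiff_const) (by ring)
    fun y hy => by linarith [hmin y hy]
  rwa [Lphi, (hψx.add_const _).deriv] at h

end Viscosity

def doubledFunctional (u v : ℝ → ℝ) (b ε N : ℝ) (z : ℝ × ℝ) : ℝ :=
  u z.1 - v z.2 - ε * arsinhPrimitive (z.1 - b) - N * (z.1 - z.2) ^ 2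

lemma exists_isCompact_superlevel_doubledFunctional {u v : ℝ → ℝ} {b ε N : ℝ}
    (hu_mono : MonotoneOn u (Ici b))
    (hu_growth : ∃ c₁ c₂ : ℝ, ∀ x, b ≤ x → u x ≤ c₁ * x + c₂)
    (hv_nonneg : ∀ y ∈ Ici b, 0 ≤ v y) (hε : 0 < ε) (hN : 1 ≤ N) (c : ℝ) :
    ∃ K, IsCompact K ∧
      ∀ z ∈ Ici b ×ˢ Ici b, c ≤ doubledFunctional u v b ε N z → z ∈ K := by
  obtain ⟨c₁, c₂, hgrowth⟩ := hu_growth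
  -- far out, the penalty `ε arsinhPrimitive` beats the linear growth of `u`
  have hfar : ∀ᶠ x in atTop, c₁ * x + c₂ - ε * arsinhPrimitive (x - b) < c := by
    filter_upwards [(tendsto_atTop_add_const_right atTop (-b) tendsto_id).eventually
      (eventually_mul_le_arsinhPrimitive ((c₁ + 1) / ε)),
      eventually_gt_atTop ((c₁ + 1) * b + c₂ - c)] with x hx hx'
    rw [id, ← sub_eq_add_neg] at hx
    have hεx : ε * ((c₁ + 1) / ε * (x - b)) = (c₁ + 1) * (x - b) := by field_simp
    nlinarith [mul_le_mul_of_nonneg_left hx hε.le]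
  obtain ⟨R₀, hR₀⟩ := eventually_atTop.1 hfar
  set R := max R₀ b
  refine ⟨Icc b R ×ˢ Icc b (R + 1 + (u R - c)), isCompact_Icc.prod isCompact_Icc, ?_⟩
  rintro ⟨x, y⟩ ⟨hx, hy⟩ hF
  simp only [mem_Ici] at hx hy
  have hxR : x ≤ R := by
    by_contra! hRx
    have := hR₀ x (le_of_max_le_left hRx.le)
    have := hgrowth x hx
    have := hv_nonneg y hy
    have := mul_nonneg (zero_le_one.trans hN) (sq_nonneg (x - y))
    simp only [doubledFunctional] at hF
    linarith
  have hux : u x ≤ u R := hu_mono hx (le_max_right R₀ b) hxR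
  have := le_mul_of_one_le_left (sq_nonneg (x - y)) hN
  have := mul_nonneg hε.le (arsinhPrimitive_nonneg (sub_nonneg.2 hx))
  have := hv_nonneg y hy
  simp only [doubledFunctional] at hF
  refine ⟨⟨hx, hxR⟩, hy, ?_⟩
  nlinarith [sq_nonneg (x - y - 1)]

lemma exists_isMaxOn_doubledFunctional {u v : ℝ → ℝ} {b ε N : ℝ}
    (hu : ContinuousOn u (Ici b)) (hu_mono : MonotoneOn u (Ici b))
    (hu_growth : ∃ c₁ c₂ : ℝ, ∀ x, b ≤ x → u x ≤ c₁ * x + c₂)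
    (hv : ContinuousOn v (Ici b)) (hv_nonneg : ∀ y ∈ Ici b, 0 ≤ v y)
    (hε : 0 < ε) (hN : 1 ≤ N) :
    ∃ z ∈ Ici b ×ˢ Ici b, IsMaxOn (doubledFunctional u v b ε N) (Ici b ×ˢ Ici b) z := by
  obtain ⟨K, hK, hFK⟩ := exists_isCompact_superlevel_doubledFunctional hu_mono hu_growth
    hv_nonneg hε hN (doubledFunctional u v b ε N (b, b))
  have hcont : ContinuousOn (doubledFunctional u v b ε N) (Ici b ×ˢ Ici b) := by
    refine (((hu.comp continuousOn_fst fun z hz => hz.1).sub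
      (hv.comp continuousOn_snd fun z hz => hz.2)).sub ?_).sub ?_ <;>
    exact Continuous.continuousOn (by fun_prop)
  refine hcont.exists_isMaxOn' (isClosed_Ici.prod isClosed_Ici) (x₀ := (b, b))
    ⟨self_mem_Ici, self_mem_Ici⟩ ?_
  filter_upwards [inter_mem_inf hK.compl_mem_cocompact (mem_principal_self _)]
    with z ⟨hzK, hzS⟩
  by_contra! hz
  exact hzK (hFK z hzS hz.le)

lemma exists_mul_penalty_lt {X : Type*} {S : Set X} {Φ q : X → ℝ} (hq : ∀ z ∈ S, 0 ≤ q z)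
    {z : ℕ → X} (hzS : ∀ n, z n ∈ S)
    (hz : ∀ n : ℕ, IsMaxOn (fun w => Φ w - ((n : ℝ) + 1) * q w) S (z n))
    (hbdd : BddBelow (range fun n : ℕ => Φ (z n) - ((n : ℝ) + 1) * q (z n)))
    {γ : ℝ} (hγ : 0 < γ) :
    ∃ n : ℕ, ((n : ℝ) + 1) * q (z n) < γ := by
  set M : ℕ → ℝ := fun n => Φ (z n) - ((n : ℝ) + 1) * q (z n)
  have hM : Antitone M := by
    refine antitone_nat_of_succ_le fun n => ?_
    have h := isMaxOn_iff.1 (hz n) _ (hzS (n + 1))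
    have := hq _ (hzS (n + 1))
    simp only [M, Nat.cast_succ] at h ⊢
    linarith
  have hlim := tendsto_atTop_ciInf hM hbdd
  -- comparing the maxima at weights `m + 1` and `2 (m + 1)` bounds the penalty at the latter
  have hgap : Tendsto (fun m : ℕ => 2 * (M m - M (2 * m + 1))) atTop (𝓝 0) := by
    have hodd : StrictMono fun m : ℕ => 2 * m + 1 := (strictMono_id.const_mul two_pos).add_const 1
    simpa using (hlim.sub (hlim.comp hodd.tendsto_atTop)).const_mul 2
  obtain ⟨m, hm⟩ := (hgap.eventually (gt_mem_nhds hγ)).exists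
  refine ⟨2 * m + 1, lt_of_le_of_lt ?_ hm⟩
  have h := isMaxOn_iff.1 (hz m) _ (hzS (2 * m + 1))
  simp only [M] at h ⊢
  push_cast at h ⊢
  linarith

lemma exists_isMaxOn_doubledFunctional_penalty_lt {u v : ℝ → ℝ} {b ε : ℝ}
    (hu : ContinuousOn u (Ici b)) (hu_mono : MonotoneOn u (Ici b))
    (hu_growth : ∃ c₁ c₂ : ℝ, ∀ x, b ≤ x → u x ≤ c₁ * x + c₂)
    (hv : ContinuousOn v (Ici b)) (hv_nonneg : ∀ y ∈ Ici b, 0 ≤ v y)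
    (hε : 0 < ε) {γ : ℝ} (hγ : 0 < γ) :
    ∃ N, 1 ≤ N ∧ ∃ x y, b ≤ x ∧ b ≤ y ∧
      IsMaxOn (doubledFunctional u v b ε N) (Ici b ×ˢ Ici b) (x, y) ∧
      N * (x - y) ^ 2 < γ := by
  choose Z hZS hZmax using fun n : ℕ => exists_isMaxOn_doubledFunctional (N := (n : ℝ) + 1)
    hu hu_mono hu_growth hv hv_nonneg hε (by linarith [n.cast_nonneg (α := ℝ)])
  have hbdd : BddBelow (range fun n : ℕ => doubledFunctional u v b ε (n + 1) (Z n)) := by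
    refine ⟨u b - v b, forall_mem_range.2 fun n => ?_⟩
    calc u b - v b = doubledFunctional u v b ε (n + 1) (b, b) := by
          simp [doubledFunctional, arsinhPrimitive]
      _ ≤ _ := isMaxOn_iff.1 (hZmax n) _ ⟨self_mem_Ici, self_mem_Ici⟩
  obtain ⟨n, hn⟩ := exists_mul_penalty_lt (q := fun z : ℝ × ℝ => (z.1 - z.2) ^ 2)
    (fun z _ => sq_nonneg _) hZS hZmax hbdd hγ
  exact ⟨n + 1, by linarith [n.cast_nonneg (α := ℝ)], (Z n).1, (Z n).2, (hZS n).1, (hZS n).2,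
    hZmax n, hn⟩

lemma Iop_sub_Iop_le_of_isMaxOn {p a : ℝ} {mu : Measure ℝ} [IsProbabilityMeasure mu]
    {u v : ℝ → ℝ} (hu_cont : ContinuousOn u (Ici (-(p / a))))
    (hu_mono : MonotoneOn u (Ici (-(p / a)))) (hu_nonneg : ∀ x ∈ Ici (-(p / a)), 0 ≤ u x)
    (hv_cont : ContinuousOn v (Ici (-(p / a)))) (hv_nonneg : ∀ y ∈ Ici (-(p / a)), 0 ≤ v y)
    {ε N x y : ℝ} (hε : 0 ≤ ε) (hx : -(p / a) ≤ x) (hy : -(p / a) ≤ y)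
    (hvu : v y ≤ u x)
    (hmax : IsMaxOn (doubledFunctional u v (-(p / a)) ε N) (Ici (-(p / a)) ×ˢ Ici (-(p / a)))
      (x, y)) :
    Iop p a mu u x - Iop p a mu v y ≤ (u x - v y) + u (-(p / a) + |x - y|) := by
  set b := -(p / a)
  refine Iop_sub_Iop_le hu_cont hv_cont hv_nonneg hx hy (sub_nonneg.2 hvu)
    (hu_nonneg _ (by simp only [mem_Ici]; linarith [abs_nonneg (x - y)])) (fun t ht => ?_)
    fun t ht => ?_
  · -- shifting both points by `t` keeps the penalty `N (x - y) ^ 2` and lowers `arsinhPrimitive`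
    have hxt : b ≤ x - t := by linarith [ht.2, min_le_left x y]
    have hyt : b ≤ y - t := by linarith [ht.2, min_le_right x y]
    have hmono := monotoneOn_arsinhPrimitive (a := x - t - b) (b := x - b)
      (by simp only [mem_Ici]; linarith) (by simp only [mem_Ici]; linarith) (by linarith [ht.1])
    have h := isMaxOn_iff.1 hmax (x - t, y - t) ⟨hxt, hyt⟩
    simp only [doubledFunctional, sub_sub_sub_cancel_right] at h
    nlinarith
  · refine hu_mono (by simp only [mem_Ici]; linarith [ht.2])
      (by simp only [mem_Ici]; linarith [abs_nonneg (x - y)]) ?_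
    have h := ht.1
    rcases le_total x y with hxy | hxy
    · rw [min_eq_left hxy] at h; linarith [ht.2]
    · rw [min_eq_right hxy] at h; linarith [le_abs_self (x - y)]

lemma doubledFunctional_isMaxOn_estimate {p lam d r a : ℝ} {mu : Measure ℝ}
    [IsProbabilityMeasure mu] (hp : 0 ≤ p) (hlam : 0 ≤ lam) (hr : 0 ≤ r) (hra : r ≤ a)
    {u v : ℝ → ℝ} (hu_sub : IsViscSubsol p lam d r a mu u (Ioi (-(p / a))))
    (hu_cont : ContinuousOn u (Ici (-(p / a)))) (hu_mono : MonotoneOn u (Ici (-(p / a))))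
    (hu_nonneg : ∀ x ∈ Ici (-(p / a)), 0 ≤ u x)
    (hv_super : IsViscSupersol p lam d r a mu v (Ioi (-(p / a))))
    (hv_cont : ContinuousOn v (Ici (-(p / a)))) (hv_nonneg : ∀ y ∈ Ici (-(p / a)), 0 ≤ v y)
    {ε N K x y : ℝ} (hε : 0 < ε) (hN : 0 ≤ N)
    (hK : ∀ t, 0 ≤ t → (p + r * t) * arsinh t - d * arsinhPrimitive t ≤ K)
    (hx : -(p / a) < x) (hy : -(p / a) < y) (hvu : v y ≤ u x)
    (hmax : IsMaxOn (doubledFunctional u v (-(p / a)) ε N) (Ici (-(p / a)) ×ˢ Ici (-(p / a)))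
      (x, y)) :
    d * (u x - v y - ε * arsinhPrimitive (x + p / a))
      ≤ ε * K + 2 * a * (N * (x - y) ^ 2) + lam * u (-(p / a) + |x - y|) := by
  set b := -(p / a)
  have hxb : x + p / a = x - b := by simp only [b, sub_neg_eq_add]
  have hmax' : ∀ x' y', b ≤ x' → b ≤ y' →
      u x' - v y' - ε * arsinhPrimitive (x' - b) - N * (x' - y') ^ 2
        ≤ u x - v y - ε * arsinhPrimitive (x - b) - N * (x - y) ^ 2 :=
    fun x' y' hx' hy' => isMaxOn_iff.1 hmax (x', y') ⟨hx', hy'⟩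
  set q := 2 * N * (x - y)
  set S := arsinh (x - b)
  have hS : 0 < S := arsinh_pos_iff.2 (by linarith)
  have hψv : HasDerivAt (fun w => -(N * (x - w) ^ 2)) q y := by
    refine ((((hasDerivAt_id y).const_sub x).pow 2).const_mul N).neg.congr_deriv ?_
    simp only [q, id]; ring
  have hψu : HasDerivAt (fun w => ε * arsinhPrimitive (w - b) + N * (w - y) ^ 2)
      (ε * S + q) x := by
    refine ((((hasDerivAt_arsinhPrimitive (x - b)).comp_sub_const x b).const_mul ε).add
      ((((hasDerivAt_id x).sub_const y).pow 2).const_mul N)).congr_deriv ?_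
    simp only [q, S, id]; ring
  obtain ⟨hq, hLv⟩ := max_le_iff.1 <| hv_super.max_le_of_hasDerivAt hy (by fun_prop) hψv
    fun w hw => by linarith [hmax' x w hx.le hw]
  have hLu : 0 ≤ drift p r a x * (ε * S + q) - (lam + d) * u x + lam * Iop p a mu u x := by
    rcases le_max_iff.1 (hu_sub.le_max_of_hasDerivAt hx (by fun_prop) hψu
      fun w hw => by linarith [hmax' w y hw hy.le]) with h | h
    · linarith [mul_pos hε hS]
    · exact h
  have hI := Iop_sub_Iop_le_of_isMaxOn (mu := mu) hu_cont hu_mono hu_nonneg hv_cont hv_nonneg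
    hε.le hx.le hy.le hvu hmax
  have hdrift : drift p r a x * S ≤ (p + r * (x - b)) * S :=
    mul_le_mul_of_nonneg_right (hxb ▸ drift_le hp hr hra x) hS.le
  have hcross : (drift p r a x - drift p r a y) * q ≤ 2 * a * (N * (x - y) ^ 2) := by
    have hq_abs : |q| = 2 * N * |x - y| := by rw [abs_mul, abs_of_nonneg (by positivity)]
    calc (drift p r a x - drift p r a y) * q ≤ |drift p r a x - drift p r a y| * |q| :=
          (le_abs_self _).trans (abs_mul _ _).le
      _ ≤ a * |x - y| * (2 * N * |x - y|) := by
          rw [hq_abs]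
          exact mul_le_mul_of_nonneg_right (abs_drift_sub_drift_le hr hra x y) (by positivity)
      _ = 2 * a * (N * (x - y) ^ 2) := by rw [← sq_abs (x - y)]; ring
  have hgen := hK (x - b) (by linarith)
  rw [hxb]
  linarith [mul_le_mul_of_nonneg_left hdrift hε.le, mul_le_mul_of_nonneg_left hgen hε.le,
    mul_le_mul_of_nonneg_left hI hlam]

lemma exists_interior_isMaxOn_doubledFunctional {u v : ℝ → ℝ} {b ε κ ρ γ x₀ : ℝ}
    (hu : ContinuousOn u (Ici b)) (hu_mono : MonotoneOn u (Ici b))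
    (hu_growth : ∃ c₁ c₂ : ℝ, ∀ x, b ≤ x → u x ≤ c₁ * x + c₂)
    (hu_bdry : u b = 0) (hv : ContinuousOn v (Ici b)) (hv_nonneg : ∀ y ∈ Ici b, 0 ≤ v y)
    (hε : 0 < ε) (hκ : 0 < κ) (hρ : 0 < ρ) (hγ : 0 < γ) (hx₀ : b ≤ x₀)
    (hκx₀ : κ ≤ u x₀ - v x₀ - ε * arsinhPrimitive (x₀ - b)) :
    ∃ N, 1 ≤ N ∧ ∃ x y, b < x ∧ b < y ∧
      IsMaxOn (doubledFunctional u v b ε N) (Ici b ×ˢ Ici b) (x, y) ∧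
      N * (x - y) ^ 2 < γ ∧ κ ≤ doubledFunctional u v b ε N (x, y) ∧
      u (b + |x - y|) < ρ := by
  obtain ⟨c, hbc, hsmall⟩ : ∃ c ∈ Ioi b, Ico b c ⊆ {w | u w < min κ ρ} :=
    mem_nhdsGE_iff_exists_Ico_subset.1
      ((hu b self_mem_Ici).eventually (gt_mem_nhds (hu_bdry ▸ lt_min hκ hρ)))
  obtain ⟨N, hN, x, y, hxb, hyb, hmax, hpen⟩ := exists_isMaxOn_doubledFunctional_penalty_lt
    hu hu_mono hu_growth hv hv_nonneg hε (lt_min hγ (pow_pos (sub_pos.2 hbc) 2))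
  have hF : κ ≤ doubledFunctional u v b ε N (x, y) :=
    calc κ ≤ doubledFunctional u v b ε N (x₀, x₀) := by
          simpa [doubledFunctional] using hκx₀
      _ ≤ _ := isMaxOn_iff.1 hmax _ ⟨hx₀, hx₀⟩
  have hxy : |x - y| < c - b := by
    refine abs_lt_of_sq_lt_sq ?_ (sub_pos.2 hbc).le
    nlinarith [hpen.trans_le (min_le_right _ _), sq_nonneg (x - y)]
  -- `u x ≥ κ` keeps `x` beyond `c`, hence `y` beyond `b`
  have hcx : c ≤ x := by
    by_contra! h
    have := (show u x < min κ ρ from hsmall ⟨hxb, h⟩).trans_le (min_le_left _ _)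
    have := mul_nonneg hε.le (arsinhPrimitive_nonneg (sub_nonneg.2 hxb))
    have := mul_nonneg (zero_le_one.trans hN) (sq_nonneg (x - y))
    simp only [doubledFunctional] at hF
    linarith [hv_nonneg y hyb]
  have hsliver : u (b + |x - y|) < min κ ρ :=
    hsmall ⟨by linarith [abs_nonneg (x - y)], by linarith⟩
  exact ⟨N, hN, x, y, hbc.trans_le hcx, by linarith [le_abs_self (x - y)], hmax,
    hpen.trans_le (min_le_left _ _), hF, hsliver.trans_le (min_le_right _ _)⟩

theorem le_of_isViscSubsol_of_isViscSupersol {p lam d r a : ℝ} {mu : Measure ℝ}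
    [IsProbabilityMeasure mu] (hp : 0 ≤ p) (hlam : 0 < lam) (hd : 0 < d) (hr : 0 ≤ r)
    (hra : r ≤ a) (hrd : r < d) {u v : ℝ → ℝ}
    (hu_sub : IsViscSubsol p lam d r a mu u (Ioi (-(p / a))))
    (hu_cont : ContinuousOn u (Ici (-(p / a)))) (hu_mono : MonotoneOn u (Ici (-(p / a))))
    (hu_nonneg : ∀ x ∈ Ici (-(p / a)), 0 ≤ u x) (hu_growth : LinGrowth p a u)
    (hu_bdry : u (-(p / a)) = 0)
    (hv_super : IsViscSupersol p lam d r a mu v (Ioi (-(p / a))))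
    (hv_cont : ContinuousOn v (Ici (-(p / a)))) (hv_nonneg : ∀ y ∈ Ici (-(p / a)), 0 ≤ v y) :
    ∀ x, -(p / a) ≤ x → u x ≤ v x := by
  intro x₀ hx₀
  by_contra! hlt
  set b := -(p / a)
  set θ := (u x₀ - v x₀) / 3
  have h3θ : u x₀ - v x₀ = 3 * θ := by simp only [θ]; ring
  have hθ : 0 < θ := by linarith
  set K := (p + d) * sinh ((p + d) / (d - r))
  obtain ⟨ε, hε, hεM⟩ := exists_pos_mul_lt (lt_min hθ (half_pos (mul_pos hd hθ)))
    (max (arsinhPrimitive (x₀ - b)) K)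
  have hεx₀ : ε * arsinhPrimitive (x₀ - b) < θ := by
    nlinarith [le_max_left (arsinhPrimitive (x₀ - b)) K, min_le_left θ (d * θ / 2)]
  have hεK : ε * K < d * θ / 2 := by
    nlinarith [le_max_right (arsinhPrimitive (x₀ - b)) K, min_le_right θ (d * θ / 2)]
  have ha : 0 ≤ a := hr.trans hra
  obtain ⟨N, hN, x, y, hx, hy, hmax, hpen, hF, hsliver⟩ :=
    exists_interior_isMaxOn_doubledFunctional hu_cont hu_mono hu_growth hu_bdry hv_cont
      hv_nonneg hε (by positivity : 0 < 2 * θ) (by positivity : 0 < d * θ / (2 * lam))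
      (by positivity : 0 < d * θ / (8 * a + 8)) hx₀ (by linarith)
  have hpen0 := mul_nonneg (zero_le_one.trans hN) (sq_nonneg (x - y))
  have hF' : 2 * θ ≤ u x - v y - ε * arsinhPrimitive (x - b) := by
    simp only [doubledFunctional] at hF
    linarith
  have hest := doubledFunctional_isMaxOn_estimate hp hlam.le hr hra hu_sub hu_cont hu_mono
    hu_nonneg hv_super hv_cont hv_nonneg hε (zero_le_one.trans hN)
    (fun t ht => generator_arsinhPrimitive_le hp hd.le hrd ht) hx hy
    (by linarith [mul_nonneg hε.le (arsinhPrimitive_nonneg (sub_nonneg.2 hx.le))]) hmax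
  rw [show x + p / a = x - b by simp only [b, sub_neg_eq_add]] at hest
  have hsliver' : lam * u (b + |x - y|) < d * θ / 2 :=
    calc lam * u (b + |x - y|) < lam * (d * θ / (2 * lam)) := mul_lt_mul_of_pos_left hsliver hlam
      _ = d * θ / 2 := by field_simp
  have hcross : 2 * a * (N * (x - y) ^ 2) < d * θ / 4 :=
    calc 2 * a * (N * (x - y) ^ 2) ≤ (8 * a + 8) / 4 * (N * (x - y) ^ 2) := by nlinarith
      _ < (8 * a + 8) / 4 * (d * θ / (8 * a + 8)) := by gcongr
      _ = d * θ / 4 := by field_simp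
  linarith [mul_le_mul_of_nonneg_left hF' hd.le, mul_pos hd hθ]

theorem stmt2_general
    (p lam d r a : ℝ) (hp : 0 < p) (hlam : 0 < lam) (hd : 0 < d)
    (hr : 0 < r) (hra : r < a) (hrd : r < d)
    (mu : Measure ℝ) [IsProbabilityMeasure mu]
    (V W : ℝ → ℝ)
    (hV_mono : MonotoneOn V (Set.Ici (-(p / a))))
    (hV_nonneg : ∀ x ∈ Set.Ici (-(p / a)), 0 ≤ V x)
    (hV_visc : IsViscSol p lam d r a mu V (Set.Ioi (-(p / a))))
    (hV_cont : ContinuousOn V (Set.Ici (-(p / a))))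
    (hV_growth : LinGrowth p a V)
    (hV_bdry : V (-(p / a)) = 0)
    (hW_mono : MonotoneOn W (Set.Ici (-(p / a))))
    (hW_nonneg : ∀ x ∈ Set.Ici (-(p / a)), 0 ≤ W x)
    (hW_visc : IsViscSol p lam d r a mu W (Set.Ioi (-(p / a))))
    (hW_cont : ContinuousOn W (Set.Ici (-(p / a))))
    (hW_growth : LinGrowth p a W)
    (hW_bdry : W (-(p / a)) = 0) :
    ∀ x : ℝ, -(p / a) ≤ x → V x = W x := fun x hx =>
  le_antisymm
    (le_of_isViscSubsol_of_isViscSupersol hp.le hlam hd hr.le hra.le hrd hV_visc.1 hV_cont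
      hV_mono hV_nonneg hV_growth hV_bdry hW_visc.2 hW_cont hW_nonneg x hx)
    (le_of_isViscSubsol_of_isViscSupersol hp.le hlam hd hr.le hra.le hrd hW_visc.1 hW_cont
      hW_mono hW_nonneg hW_growth hW_bdry hV_visc.2 hV_cont hV_nonneg x hx)

theorem stmt2
    (p lam d r a : ℝ) (hp : 0 < p) (hlam : 0 < lam) (hd : 0 < d)
    (hr : 0 < r) (hra : r < a) (hrd : r < d)
    (mu : Measure ℝ) [IsProbabilityMeasure mu] (hmu : mu (Set.Iic 0) = 0)
    (V W : ℝ → ℝ)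
    (hV_mono : MonotoneOn V (Set.Ici (-(p / a))))
    (hV_nonneg : ∀ x ∈ Set.Ici (-(p / a)), 0 ≤ V x)
    (hV_visc : IsViscSol p lam d r a mu V (Set.Ioi (-(p / a))))
    (hV_cont : ContinuousOn V (Set.Ici (-(p / a))))
    (hV_lip : LocLipOn (Set.Ioi (-(p / a))) V)
    (hV_growth : LinGrowth p a V)
    (hV_bdry : V (-(p / a)) = 0)
    (hW_mono : MonotoneOn W (Set.Ici (-(p / a))))
    (hW_nonneg : ∀ x ∈ Set.Ici (-(p / a)), 0 ≤ W x)
    (hW_visc : IsViscSol p lam d r a mu W (Set.Ioi (-(p / a))))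
    (hW_cont : ContinuousOn W (Set.Ici (-(p / a))))
    (hW_lip : LocLipOn (Set.Ioi (-(p / a))) W)
    (hW_growth : LinGrowth p a W)
    (hW_bdry : W (-(p / a)) = 0) :
    ∀ x : ℝ, -(p / a) ≤ x → V x = W x :=
  stmt2_general p lam d r a hp hlam hd hr hra hrd mu V W hV_mono hV_nonneg hV_visc hV_cont hV_growth
    hV_bdry hW_mono hW_nonneg hW_visc hW_cont hW_growth hW_bdry
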